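/- arXiv:math/0303349 — 8 statements merged into one kernel-verified Lean document; each statement's English description precedes it below -/
import Mathlib

section
/- Let R be a commutative ring, let S = R[X] be the polynomial ring in one variable over R, and let M be an S-module. Then the sequence 0 → S ⊗_R M → S ⊗_R M → M → 0 is exact, where the first map sends s ⊗ m to sX ⊗ m − s ⊗ (X·m), and the second map sends s ⊗ m to s·m. -/
open Polynomial TensorProduct

section Aux
variable (R : Type*) [CommRing R] (M : Type*) [AddCommGroup M]
    [Module R M] [Module (Polynomial R) M] [IsScalarTower R (Polynomial R) M]

noncomputable def auxF (n : ℕ) : M →ₗ[R] TensorProduct R (Polynomial R) M :=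
  ∑ i ∈ Finset.range n,
    (TensorProduct.mk R (Polynomial R) M ((Polynomial.X : Polynomial R) ^ i)).comp
      ((LinearMap.lsmul (Polynomial R) M
        ((Polynomial.X : Polynomial R) ^ (n - 1 - i))).restrictScalars R)

noncomputable def auxG : TensorProduct R (Polynomial R) M →ₗ[R] TensorProduct R (Polynomial R) M :=
  TensorProduct.lift (Polynomial.lsum fun n => LinearMap.toSpanSingleton R _ (auxF R M n))

theorem auxG_tmul (n : ℕ) (m : M) :
    auxG R M (((Polynomial.X : Polynomial R) ^ n) ⊗ₜ[R] m) = auxF R M n m := by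
  rw [auxG, TensorProduct.lift.tmul]
  rw [Polynomial.lsum_apply, ← Polynomial.monomial_one_right_eq_X_pow,
    Polynomial.sum_monomial_index]
  · simp
  · simp

theorem auxF_apply (n : ℕ) (m : M) :
    auxF R M n m = ∑ i ∈ Finset.range n,
      ((Polynomial.X : Polynomial R) ^ i) ⊗ₜ[R] (((Polynomial.X : Polynomial R) ^ (n - 1 - i)) • m) := by
  simp [auxF, LinearMap.sum_apply]
end Aux

/-- Let `R` be a commutative ring, `S = R[X]`, and `M` an `S`-module.  Then the sequence
`0 → S ⊗_R M → S ⊗_R M → M → 0` is exact, where the first map `d` is the `S`-linear map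
determined by `d(1 ⊗ m) = X ⊗ m − 1 ⊗ (X·m)` and the second map `e` is the action map
`s ⊗ m ↦ s·m`. -/
theorem polynomial_tensor_exact_sequence
    (R : Type*) [CommRing R] (M : Type*) [AddCommGroup M]
    [Module R M] [Module (Polynomial R) M] [IsScalarTower R (Polynomial R) M]
    (d : TensorProduct R (Polynomial R) M →ₗ[Polynomial R] TensorProduct R (Polynomial R) M)
    (hd : ∀ m : M, d (1 ⊗ₜ[R] m) =
      (Polynomial.X : Polynomial R) ⊗ₜ[R] m - 1 ⊗ₜ[R] ((Polynomial.X : Polynomial R) • m))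
    (e : TensorProduct R (Polynomial R) M →ₗ[Polynomial R] M)
    (he : ∀ (s : Polynomial R) (m : M), e (s ⊗ₜ[R] m) = s • m) :
    Function.Injective d ∧ Function.Surjective e ∧ LinearMap.range d = LinearMap.ker e := by
  set g := auxG R M with hg
  have hdmon : ∀ (n : ℕ) (m : M), d (((X : Polynomial R) ^ n) ⊗ₜ[R] m) =
      ((X : Polynomial R) ^ (n+1)) ⊗ₜ[R] m
        - ((X : Polynomial R) ^ n) ⊗ₜ[R] ((X : Polynomial R) • m) := by
    intro n m
    have h : (((X : Polynomial R) ^ n) ⊗ₜ[R] m)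
        = ((X : Polynomial R) ^ n) • ((1 : Polynomial R) ⊗ₜ[R] m) := by
      rw [smul_tmul', smul_eq_mul, mul_one]
    rw [h, map_smul, hd, smul_sub, smul_tmul', smul_tmul', smul_eq_mul, smul_eq_mul,
      mul_one, ← pow_succ]
  have hA : ∀ (n : ℕ) (m : M), g (d (((X : Polynomial R) ^ n) ⊗ₜ[R] m))
      = ((X : Polynomial R) ^ n) ⊗ₜ[R] m := by
    intro n m
    rw [hdmon, map_sub, hg, auxG_tmul, auxG_tmul, auxF_apply, auxF_apply]
    have h1 : ∀ i ∈ Finset.range n,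
        ((X : Polynomial R) ^ i) ⊗ₜ[R] (((X : Polynomial R) ^ (n - 1 - i)) • ((X : Polynomial R) • m))
        = ((X : Polynomial R) ^ i) ⊗ₜ[R] (((X : Polynomial R) ^ (n - i)) • m) := by
      intro i hi
      rw [Finset.mem_range] at hi
      rw [smul_smul, ← pow_succ]
      have h : n - 1 - i + 1 = n - i := by omega
      rw [h]
    rw [Finset.sum_congr rfl h1]
    have h2 : ∀ i ∈ Finset.range (n+1),
        ((X : Polynomial R) ^ i) ⊗ₜ[R] (((X : Polynomial R) ^ (n + 1 - 1 - i)) • m)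
        = ((X : Polynomial R) ^ i) ⊗ₜ[R] (((X : Polynomial R) ^ (n - i)) • m) := by
      intro i hi
      congr 2
    rw [Finset.sum_congr rfl h2, Finset.sum_range_succ]
    simp
  have hB : ∀ (n : ℕ) (m : M), d (g (((X : Polynomial R) ^ n) ⊗ₜ[R] m))
      = ((X : Polynomial R) ^ n) ⊗ₜ[R] m - (1 : Polynomial R) ⊗ₜ[R] (((X : Polynomial R) ^ n) • m) := by
    intro n m
    rw [hg, auxG_tmul, auxF_apply, map_sum]
    have h1 : ∀ i ∈ Finset.range n,
        d (((X : Polynomial R) ^ i) ⊗ₜ[R] (((X : Polynomial R) ^ (n - 1 - i)) • m))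
        = ((X : Polynomial R) ^ (i+1)) ⊗ₜ[R] (((X : Polynomial R) ^ (n - (i+1))) • m)
          - ((X : Polynomial R) ^ i) ⊗ₜ[R] (((X : Polynomial R) ^ (n - i)) • m) := by
      intro i hi
      rw [Finset.mem_range] at hi
      have e2 : n - 1 - i + 1 = n - i := by omega
      have e1 : n - 1 - i = n - (i + 1) := by omega
      rw [hdmon, smul_smul, ← pow_succ', e2, e1]
    rw [Finset.sum_congr rfl h1,
      Finset.sum_range_sub (fun j => ((X : Polynomial R) ^ j) ⊗ₜ[R]
        (((X : Polynomial R) ^ (n - j)) • m)) n]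
    simp
  have h1 : ∀ t, g (d t) = t := by
    intro t
    induction t using TensorProduct.induction_on with
    | zero => simp
    | tmul p m =>
      induction p using Polynomial.induction_on' with
      | add p q hp hq => rw [add_tmul, map_add, map_add, hp, hq]
      | monomial n a =>
        rw [← C_mul_X_pow_eq_monomial, ← smul_eq_C_mul, ← smul_tmul',
          LinearMap.map_smul_of_tower, map_smul, hA]
    | add x y hx hy => rw [map_add, map_add, hx, hy]
  have h2 : ∀ t, d (g t) = t - (1 : Polynomial R) ⊗ₜ[R] (e t) := by
    intro t
    induction t using TensorProduct.induction_on with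
    | zero => simp
    | tmul p m =>
      induction p using Polynomial.induction_on' with
      | add p q hp hq =>
        rw [add_tmul, map_add, map_add, hp, hq, map_add, tmul_add]
        abel
      | monomial n a =>
        rw [← C_mul_X_pow_eq_monomial, ← smul_eq_C_mul, ← smul_tmul',
          map_smul, LinearMap.map_smul_of_tower, hB, LinearMap.map_smul_of_tower, he, smul_sub]
        congr 1
        rw [smul_tmul', smul_tmul]
    | add x y hx hy =>
      rw [map_add, map_add, hx, hy, map_add, tmul_add]
      abel
  refine ⟨Function.LeftInverse.injective h1, fun m => ⟨(1 : Polynomial R) ⊗ₜ[R] m, by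
    rw [he, one_smul]⟩, ?_⟩
  ext t
  simp only [LinearMap.mem_range, LinearMap.mem_ker]
  constructor
  · rintro ⟨s, rfl⟩
    have h3 := h2 (d s)
    rw [h1] at h3
    have h4 : (1 : Polynomial R) ⊗ₜ[R] (e (d s)) = 0 := sub_eq_self.mp h3.symm
    have h5 := congrArg e h4
    rw [he, one_smul, map_zero] at h5
    exact h5
  · intro ht
    exact ⟨g t, by rw [h2, ht, tmul_zero, sub_zero]⟩
end

section
/- Let R be a commutative ring and S = R[X]. For any S-module M, the S-linear map ∂ : S ⊗_R M → S ⊗_R M determined by ∂(1 ⊗ m) = X ⊗ m − 1 ⊗ (X·m) is injective. -/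
open Polynomial TensorProduct

/-- Let `R` be a commutative ring and `S = R[X]`.  For any `S`-module `M`, the `S`-linear map
`d : S ⊗_R M → S ⊗_R M` determined by `d(1 ⊗ m) = X ⊗ m − 1 ⊗ (X·m)` is injective. -/
theorem polynomial_tensor_boundary_injective
    (R : Type*) [CommRing R] (M : Type*) [AddCommGroup M]
    [Module R M] [Module (Polynomial R) M] [IsScalarTower R (Polynomial R) M]
    (d : TensorProduct R (Polynomial R) M →ₗ[Polynomial R] TensorProduct R (Polynomial R) M)
    (hd : ∀ m : M, d (1 ⊗ₜ[R] m) =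
      (Polynomial.X : Polynomial R) ⊗ₜ[R] m - 1 ⊗ₜ[R] ((Polynomial.X : Polynomial R) • m)) :
    Function.Injective d := by
  classical
  -- the equivalence `R[X] ⊗ M ≃ (ℕ →₀ M)`
  set e : TensorProduct R (Polynomial R) M ≃ₗ[R] (ℕ →₀ M) :=
    (TensorProduct.congr (Polynomial.basisMonomials R).repr (LinearEquiv.refl R M)).trans
      (TensorProduct.finsuppScalarLeft R M ℕ) with he
  have he_tmul : ∀ (p : Polynomial R) (m : M) (k : ℕ), e (p ⊗ₜ[R] m) k = p.coeff k • m := by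
    intro p m k
    simp only [he, LinearEquiv.trans_apply, TensorProduct.congr_tmul, LinearEquiv.refl_apply,
      TensorProduct.finsuppScalarLeft_apply_tmul_apply]
    congr 1
  -- `d` on pure tensors
  have hd' : ∀ (p : Polynomial R) (m : M),
      d (p ⊗ₜ[R] m) = (p * Polynomial.X) ⊗ₜ[R] m - p ⊗ₜ[R] ((Polynomial.X : Polynomial R) • m) := by
    intro p m
    have : (p ⊗ₜ[R] m : TensorProduct R (Polynomial R) M) = p • (1 ⊗ₜ[R] m) := by
      rw [TensorProduct.smul_tmul', smul_eq_mul, mul_one]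
    rw [this, map_smul, hd, smul_sub, TensorProduct.smul_tmul', TensorProduct.smul_tmul',
      smul_eq_mul, smul_eq_mul, mul_one]
  -- key coefficient identity
  have key : ∀ (x : TensorProduct R (Polynomial R) M) (k : ℕ),
      e (d x) (k + 1) = e x k - (Polynomial.X : Polynomial R) • e x (k + 1) := by
    intro x k
    induction x using TensorProduct.induction_on with
    | zero => simp
    | tmul p m =>
        rw [hd', map_sub, Finsupp.sub_apply, he_tmul, he_tmul, he_tmul, he_tmul,
          Polynomial.coeff_mul_X]
        rw [smul_comm]
    | add x y hx hy =>
        simp only [map_add, Finsupp.add_apply, hx, hy, smul_add]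
        abel
  -- kernel triviality
  have hker : ∀ x, d x = 0 → x = 0 := by
    intro x hx
    have h0 : ∀ k, e x k = (Polynomial.X : Polynomial R) • e x (k + 1) := by
      intro k
      have := key x k
      rw [hx, map_zero, Finsupp.coe_zero, Pi.zero_apply] at this
      have := this.symm
      rwa [sub_eq_zero] at this
    have hiter : ∀ (i k : ℕ), e x k = ((Polynomial.X : Polynomial R) ^ i) • e x (k + i) := by
      intro i
      induction i with
      | zero => intro k; simp
      | succ i ih =>
          intro k
          rw [h0 k, ih (k + 1), ← smul_assoc, smul_eq_mul, ← pow_succ']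
          ring_nf
    have hzero : ∀ k, e x k = 0 := by
      intro k
      obtain ⟨N, hN⟩ : ∃ N, ∀ j ≥ N, e x j = 0 := by
        refine ⟨((e x).support.sup id) + 1, fun j hj => ?_⟩
        by_contra h
        have hmem : j ∈ (e x).support := Finsupp.mem_support_iff.mpr h
        have := Finset.le_sup (f := id) hmem
        simp only [id_eq] at this
        omega
      rw [hiter (N + 1) k, hN (k + (N + 1)) (by omega), smul_zero]
    have : e x = 0 := Finsupp.ext fun k => hzero k
    have := congrArg e.symm this
    rwa [LinearEquiv.symm_apply_apply, map_zero] at this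
  intro a b hab
  have : d (a - b) = 0 := by rw [map_sub, hab, sub_self]
  have := hker _ this
  exact sub_eq_zero.mp this
end

section
/- Let R be a commutative ring and S = R[X]. For any S-module M, the kernel of the action map ι : S ⊗_R M → M, s ⊗ m ↦ s·m, equals the image of the map ∂ : S ⊗_R M → S ⊗_R M determined by ∂(1 ⊗ m) = X ⊗ m − 1 ⊗ (X·m). -/
open Polynomial TensorProduct

/-- Let `R` be a commutative ring and `S = R[X]`.  For any `S`-module `M`, the kernel of the
action map `e : S ⊗_R M → M`, `s ⊗ m ↦ s·m`, equals the image of the `S`-linear map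
`d : S ⊗_R M → S ⊗_R M` determined by `d(1 ⊗ m) = X ⊗ m − 1 ⊗ (X·m)`. -/
theorem polynomial_tensor_ker_eq_range
    (R : Type*) [CommRing R] (M : Type*) [AddCommGroup M]
    [Module R M] [Module (Polynomial R) M] [IsScalarTower R (Polynomial R) M]
    (d : TensorProduct R (Polynomial R) M →ₗ[Polynomial R] TensorProduct R (Polynomial R) M)
    (hd : ∀ m : M, d (1 ⊗ₜ[R] m) =
      (Polynomial.X : Polynomial R) ⊗ₜ[R] m - 1 ⊗ₜ[R] ((Polynomial.X : Polynomial R) • m))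
    (e : TensorProduct R (Polynomial R) M →ₗ[Polynomial R] M)
    (he : ∀ (s : Polynomial R) (m : M), e (s ⊗ₜ[R] m) = s • m) :
    LinearMap.ker e = LinearMap.range d := by
  apply le_antisymm
  · -- ker ⊆ range
    have key : ∀ t : TensorProduct R (Polynomial R) M,
        t - 1 ⊗ₜ[R] (e t) ∈ LinearMap.range d := by
      intro t
      induction t using TensorProduct.induction_on with
      | zero => simp
      | tmul s m =>
        rw [he]
        induction s using Polynomial.induction_on with
        | C r =>
          have h1 : (C r : Polynomial R) ⊗ₜ[R] m = (1 : Polynomial R) ⊗ₜ[R] ((C r : Polynomial R) • m) := by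
            have h2 : (C r : Polynomial R) = r • 1 := by
              simp [Algebra.smul_def, Polynomial.algebraMap_eq]
            have h3 : (C r : Polynomial R) • m = r • m := by
              rw [← algebraMap_smul (Polynomial R) r m, Polynomial.algebraMap_eq]
            rw [h3, h2, TensorProduct.smul_tmul]
          rw [h1, sub_self]
          exact zero_mem _
        | add p q hp hq =>
          have : (p + q) ⊗ₜ[R] m - 1 ⊗ₜ[R] ((p + q) • m) =
              (p ⊗ₜ[R] m - 1 ⊗ₜ[R] (p • m)) + (q ⊗ₜ[R] m - 1 ⊗ₜ[R] (q • m)) := by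
            rw [TensorProduct.add_tmul, add_smul, TensorProduct.tmul_add]
            abel
          rw [this]
          exact add_mem hp hq
        | monomial n a hs =>
          set s : Polynomial R := C a * X ^ n with hs_def
          have hmul : C a * X ^ (n + 1) = X * s := by ring
          have hsm1 : (X : Polynomial R) • s ⊗ₜ[R] m = (X * s) ⊗ₜ[R] m := by
            rw [TensorProduct.smul_tmul', smul_eq_mul]
          have hsm2 : (X : Polynomial R) • (1 : Polynomial R) ⊗ₜ[R] (s • m)
              = (X : Polynomial R) ⊗ₜ[R] (s • m) := by
            rw [TensorProduct.smul_tmul', smul_eq_mul, mul_one]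
          have hkey : (X * s) ⊗ₜ[R] m - 1 ⊗ₜ[R] ((X * s) • m) =
              (X : Polynomial R) • (s ⊗ₜ[R] m - 1 ⊗ₜ[R] (s • m)) + d (1 ⊗ₜ[R] (s • m)) := by
            rw [hd, smul_sub, hsm1, hsm2, mul_smul]
            abel
          rw [hmul, hkey]
          exact add_mem (Submodule.smul_mem _ _ hs) (LinearMap.mem_range_self d _)
      | add x y hx hy =>
        have : (x + y) - 1 ⊗ₜ[R] (e (x + y)) =
            (x - 1 ⊗ₜ[R] (e x)) + (y - 1 ⊗ₜ[R] (e y)) := by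
          rw [map_add, TensorProduct.tmul_add]
          abel
        rw [this]
        exact add_mem hx hy
    intro x hx
    have hx0 : e x = 0 := hx
    have := key x
    rwa [hx0, TensorProduct.tmul_zero, sub_zero] at this
  · -- range ⊆ ker
    rintro _ ⟨y, rfl⟩
    show e (d y) = 0
    induction y using TensorProduct.induction_on with
    | zero => simp
    | tmul s m =>
      have h1 : s ⊗ₜ[R] m = s • ((1 : Polynomial R) ⊗ₜ[R] m) := by
        rw [TensorProduct.smul_tmul', smul_eq_mul, mul_one]
      rw [h1, map_smul, hd, map_smul, map_sub, he, he, one_smul, sub_self, smul_zero]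
    | add x y hx hy => rw [map_add, map_add, hx, hy, add_zero]
end

section
/- Let H be a poly-exact sequence on [n] = {1,...,n}. Then for every subset F ⊆ [n], every index i > |F|, and every a ∈ ℤⁿ, the group H_i(F)_a is zero. -/
/-- The `s`-th standard basis vector of `ℤⁿ`. -/
def stdBasis {n : ℕ} (s : Fin n) : Fin n → ℤ := fun j => if j = s then 1 else 0

/-- A *poly-exact sequence* on `[n]`: a family of abelian groups `H_i(F)_a` indexed by subsets
`F ⊆ [n]`, homological degrees `i ∈ ℕ` and multidegrees `a ∈ ℤⁿ`, such that `H_i(∅) = 0` for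
`i > 0`, each `H_i(F)_a` vanishes for `a₁+⋯+aₙ` sufficiently small, and for each `F`,
`s ∉ F`, `i`, `a` there is a fundamental exact sequence
`H_i(F)_{a−ε_s} → H_i(F)_a → H_i(F∪{s})_a → H_{i−1}(F)_{a−ε_s} → H_{i−1}(F)_a`. -/
structure PolyExact (n : ℕ) where
  /-- the groups `H_i(F)_a` -/
  H : Finset (Fin n) → ℕ → (Fin n → ℤ) → Type
  grp : ∀ F i a, AddCommGroup (H F i a)
  /-- axiom (i): `H_i(∅)_a = 0` for `i > 0` -/
  empty_subsingleton : ∀ i a, 0 < i → Subsingleton (H ∅ i a)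
  /-- axiom (ii): `H_i(F)_a = 0` for `|a| ≪ 0` -/
  bounded_below : ∀ F i, ∃ c : ℤ, ∀ a, (∑ j, a j) ≤ c → Subsingleton (H F i a)
  /-- the map `ι_s : H_i(F)_a → H_i(F∪{s})_a` -/
  ι : ∀ (F : Finset (Fin n)) (i : ℕ) (a : Fin n → ℤ) (s : Fin n), s ∉ F →
    letI := grp F i a; letI := grp (insert s F) i a
    H F i a →+ H (insert s F) i a
  /-- the connecting map `π_s : H_{i+1}(F∪{s})_a → H_i(F)_{a−ε_s}` -/
  π : ∀ (F : Finset (Fin n)) (i : ℕ) (a : Fin n → ℤ) (s : Fin n), s ∉ F →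
    letI := grp (insert s F) (i + 1) a; letI := grp F i (a - stdBasis s)
    H (insert s F) (i + 1) a →+ H F i (a - stdBasis s)
  /-- the map `∂_s : H_i(F)_{a−ε_s} → H_i(F)_a` -/
  δ : ∀ (F : Finset (Fin n)) (i : ℕ) (a : Fin n → ℤ) (s : Fin n), s ∉ F →
    letI := grp F i (a - stdBasis s); letI := grp F i a
    H F i (a - stdBasis s) →+ H F i a
  /-- exactness at `H_i(F)_a` of `H_i(F)_{a−ε_s} → H_i(F)_a → H_i(F∪{s})_a` -/
  exact_δ_ι : ∀ F i a s (hs : s ∉ F),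
    Function.Exact (δ F i a s hs) (ι F i a s hs)
  /-- exactness at `H_{i+1}(F∪{s})_a` of
  `H_{i+1}(F)_a → H_{i+1}(F∪{s})_a → H_i(F)_{a−ε_s}` -/
  exact_ι_π : ∀ F i a s (hs : s ∉ F),
    Function.Exact (ι F (i + 1) a s hs) (π F i a s hs)
  /-- exactness at `H_i(F)_{a−ε_s}` of
  `H_{i+1}(F∪{s})_a → H_i(F)_{a−ε_s} → H_i(F)_a` -/
  exact_π_δ : ∀ F i a s (hs : s ∉ F),
    Function.Exact (π F i a s hs) (δ F i a s hs)
  /-- exactness at `H_0(F∪{s})_a`: since `H_{-1} = 0`, the map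
  `ι_s : H_0(F)_a → H_0(F∪{s})_a` is surjective -/
  ι_zero_surjective : ∀ F a s (hs : s ∉ F),
    Function.Surjective (ι F 0 a s hs)

/-- Let `H` be a poly-exact sequence on `[n]`.  Then for every `F ⊆ [n]`, every `i > |F|`
and every `a ∈ ℤⁿ`, the group `H_i(F)_a` is zero. -/
theorem polyExact_vanishing {n : ℕ} (P : PolyExact n) (F : Finset (Fin n)) (i : ℕ)
    (hi : F.card < i) (a : Fin n → ℤ) : Subsingleton (P.H F i a) := by
  induction F using Finset.induction_on generalizing i a with
  | empty => exact P.empty_subsingleton i a (by simpa using hi)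
  | @insert s F' hs ih =>
    rw [Finset.card_insert_of_notMem hs] at hi
    obtain ⟨j, rfl⟩ : ∃ j, i = j + 1 := ⟨i - 1, by omega⟩
    have h1 : Subsingleton (P.H F' (j+1) a) := ih (i := j+1) (by omega) a
    have h2 : Subsingleton (P.H F' j (a - stdBasis s)) := ih (i := j) (by omega) _
    letI := P.grp F' (j+1) a
    letI := P.grp (insert s F') (j+1) a
    letI := P.grp F' j (a - stdBasis s)
    have hx : ∀ z : P.H (insert s F') (j+1) a, z = 0 := by
      intro z
      have hz : P.π F' j a s hs z = 0 := Subsingleton.elim _ _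
      obtain ⟨w, hw⟩ := (P.exact_ι_π F' j a s hs z).mp hz
      rw [← hw, Subsingleton.elim w 0, map_zero]
    exact ⟨fun x y => by rw [hx x, hx y]⟩
end

section
/- Let H be a poly-exact sequence on [n]. Let F ⊆ [n], s ∈ [n]\F, 0 ≤ i ≤ |F|, a ∈ ℤⁿ, and suppose H_i(F)_a ≠ 0. Then there exists b ∈ ℕ such that H_i(F ∪ {s})_{a − b·ε_s} ≠ 0. -/
/-! If `H_i(F∪{s})` vanished in every degree `a − b·ε_s`, exactness of
`H_i(F)_{a−ε_s} → H_i(F)_a → H_i(F∪{s})_a` would make each map `∂_s` surjective,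
so the nonvanishing of `H_i(F)_a` would propagate to every `H_i(F)_{a−b·ε_s}`; but these
vanish once `|a| − b` is small enough. -/

theorem sum_stdBasis {n : ℕ} (s : Fin n) : ∑ j, stdBasis s j = 1 := by
  simp [stdBasis]

theorem sum_sub_smul_stdBasis {n : ℕ} (a : Fin n → ℤ) (b : ℤ) (s : Fin n) :
    ∑ j, (a - b • stdBasis s) j = ∑ j, a j - b := by
  simp only [Pi.sub_apply, Pi.smul_apply, smul_eq_mul, Finset.sum_sub_distrib,
    ← Finset.mul_sum, sum_stdBasis, mul_one]

theorem sub_natCast_succ_smul {M : Type*} [AddCommGroup M] (a v : M) (b : ℕ) :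
    a - ((b + 1 : ℕ) : ℤ) • v = (a - (b : ℤ) • v) - v := by
  rw [Nat.cast_succ, add_smul, one_smul, sub_sub]

namespace PolyExact

attribute [local instance] PolyExact.grp

variable {n : ℕ} (P : PolyExact n) {F : Finset (Fin n)} {s : Fin n} {i : ℕ}

theorem δ_surjective_of_subsingleton (hs : s ∉ F) (a : Fin n → ℤ)
    [Subsingleton (P.H (insert s F) i a)] : Function.Surjective (P.δ F i a s hs) :=
  fun y => (P.exact_δ_ι F i a s hs y).mp (Subsingleton.elim _ _)

theorem nontrivial_sub_stdBasis (hs : s ∉ F) (a : Fin n → ℤ)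
    [Subsingleton (P.H (insert s F) i a)] [Nontrivial (P.H F i a)] :
    Nontrivial (P.H F i (a - stdBasis s)) :=
  (P.δ_surjective_of_subsingleton hs a).nontrivial

theorem nontrivial_sub_smul_stdBasis (hs : s ∉ F) (a : Fin n → ℤ)
    (hne : Nontrivial (P.H F i a))
    (hzero : ∀ b : ℕ, Subsingleton (P.H (insert s F) i (a - (b : ℤ) • stdBasis s))) (b : ℕ) :
    Nontrivial (P.H F i (a - (b : ℤ) • stdBasis s)) := by
  induction b with
  | zero => simpa using hne
  | succ b ih =>
    have := hzero b
    rw [sub_natCast_succ_smul]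
    exact P.nontrivial_sub_stdBasis hs _

theorem exists_subsingleton_sub_smul_stdBasis (F : Finset (Fin n)) (i : ℕ) (a : Fin n → ℤ)
    (s : Fin n) : ∃ b : ℕ, Subsingleton (P.H F i (a - (b : ℤ) • stdBasis s)) := by
  obtain ⟨c, hc⟩ := P.bounded_below F i
  refine ⟨(∑ j, a j - c).toNat, hc _ ?_⟩
  rw [sum_sub_smul_stdBasis]
  linarith [Int.self_le_toNat (∑ j, a j - c)]

end PolyExact

theorem polyExact_push_general {n : ℕ} (P : PolyExact n) (F : Finset (Fin n)) (s : Fin n)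
    (hs : s ∉ F) (i : ℕ) (a : Fin n → ℤ)
    (hne : Nontrivial (P.H F i a)) :
    ∃ b : ℕ, Nontrivial (P.H (insert s F) i (a - (b : ℤ) • stdBasis s)) := by
  by_contra! hzero
  obtain ⟨b, hb⟩ := P.exists_subsingleton_sub_smul_stdBasis F i a s
  exact not_nontrivial _ (P.nontrivial_sub_smul_stdBasis hs a hne hzero b)

/-- Let `H` be a poly-exact sequence on `[n]`, `F ⊆ [n]`, `s ∈ [n]\F`, `0 ≤ i ≤ |F|` and
`a ∈ ℤⁿ` with `H_i(F)_a ≠ 0`.  Then there exists `b ∈ ℕ` with `H_i(F∪{s})_{a − b·ε_s} ≠ 0`. -/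
theorem polyExact_push {n : ℕ} (P : PolyExact n) (F : Finset (Fin n)) (s : Fin n)
    (hs : s ∉ F) (i : ℕ) (hi : i ≤ F.card) (a : Fin n → ℤ)
    (hne : Nontrivial (P.H F i a)) :
    ∃ b : ℕ, Nontrivial (P.H (insert s F) i (a - (b : ℤ) • stdBasis s)) :=
  polyExact_push_general P F s hs i a hne
end

section
/- Let K be a field and S = K[X] the polynomial ring in one variable. Set M = K[X, X⁻¹]/(S·X), the quotient of the Laurent polynomial ring (viewed as S-module) by the S-submodule generated by X. Then Tor₀^S(M, K) = 0 while Tor₁^S(M, K) ≅ K. -/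
/-!
Multiplication by `r` followed by the quotient map is a short exact sequence
`0 ⟶ R ⟶ R ⟶ R ⧸ (r) ⟶ 0` as soon as `r` is a non-zero-divisor, so it is a projective
resolution of `R ⧸ (r)`. Tensoring it with `M` gives `M --r--> M`, hence
`Tor₀(M, R ⧸ (r)) ≅ M ⧸ r M` and `Tor₁(M, R ⧸ (r)) ≅ ker (r : M → M)`.

For `M = K[T, T⁻¹] ⧸ T • K[T]` over `K[X]`, with `X` acting as `T`, multiplication by `X` is
surjective since `T` is invertible, and its kernel is the image of `K[X]`, namely
`K[X] ⧸ (K[X] ∩ T • K[X]) = K[X] ⧸ (X)`.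
-/

open CategoryTheory Limits ZeroObject MonoidalCategory

noncomputable section

universe u

namespace ChainComplex

variable {C : Type*} [Category* C] [HasZeroMorphisms C] [HasZeroObject C] {A B : C} (f : A ⟶ B)

variable (A B) in
def twoTermX : ℕ → C
  | 0 => B
  | 1 => A
  | _ + 2 => 0

def twoTermD : ∀ n : ℕ, twoTermX A B (n + 1) ⟶ twoTermX A B n
  | 0 => f
  | _ + 1 => 0

/-- `B` sits in degree `0` and `A` in degree `1`. -/
def twoTerm : ChainComplex C ℕ :=
  of (twoTermX A B) (twoTermD f) fun _ => zero_comp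

lemma twoTerm_d_one_zero : (twoTerm f).d 1 0 = f :=
  of_d (twoTermX A B) (twoTermD f) 0

lemma twoTerm_d_succ_succ (n : ℕ) : (twoTerm f).d (n + 2) (n + 1) = 0 :=
  of_d (twoTermX A B) (twoTermD f) (n + 1)

lemma isZero_twoTerm_X_succ_succ (n : ℕ) : IsZero ((twoTerm f).X (n + 2)) :=
  isZero_zero C

def twoTermToSingle₀ {X : C} (g : B ⟶ X) (hfg : f ≫ g = 0) :
    twoTerm f ⟶ (single₀ C).obj X :=
  ((twoTerm f).toSingle₀Equiv X).symm ⟨g, by rw [twoTerm_d_one_zero]; exact hfg⟩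

lemma twoTermToSingle₀_f_zero {X : C} (g : B ⟶ X) (hfg : f ≫ g = 0) :
    (twoTermToSingle₀ f g hfg).f 0 = g :=
  toSingle₀Equiv_symm_apply_f_zero _ _

end ChainComplex

namespace CategoryTheory.ShortComplex.ShortExact

variable {C : Type*} [Category* C] [Abelian C] {S : ShortComplex C}

lemma quasiIso_twoTermToSingle₀ (hS : S.ShortExact) :
    _root_.QuasiIso (ChainComplex.twoTermToSingle₀ S.f S.g S.zero) where
  quasiIsoAt
    | 0 => by
      rw [ChainComplex.quasiIsoAt₀_iff, ShortComplex.quasiIso_iff_of_zeros' _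
        ((ChainComplex.twoTerm S.f).shape 0 0 (by simp)) rfl rfl]
      have hπ := ChainComplex.twoTermToSingle₀_f_zero S.f S.g S.zero
      -- in degree `0`, the comparison short complex is `S` itself
      refine ⟨ShortComplex.exact_of_iso (S₁ := S) (ShortComplex.isoMk (Iso.refl _) (Iso.refl _)
        (Iso.refl _) ?_ ?_) hS.exact, ?_⟩
      · exact ((Category.id_comp _).trans (ChainComplex.twoTerm_d_one_zero S.f)).trans
          (Category.comp_id _).symm
      · exact ((Category.id_comp _).trans hπ).trans (Category.comp_id _).symm
      · change Epi ((ChainComplex.twoTermToSingle₀ S.f S.g S.zero).f 0)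
        rw [hπ]
        exact hS.epi_g
    | n + 1 => by
      rw [quasiIsoAt_iff_exactAt' (hL := ChainComplex.exactAt_succ_single_obj ..)]
      match n with
      | 0 =>
        rw [HomologicalComplex.exactAt_iff' _ 2 1 0 (by simp) (by simp),
          ShortComplex.exact_iff_mono _ (ChainComplex.twoTerm_d_succ_succ S.f 0)]
        change Mono ((ChainComplex.twoTerm S.f).d 1 0)
        rw [ChainComplex.twoTerm_d_one_zero]
        exact hS.mono_f
      | n + 1 =>
        rw [HomologicalComplex.exactAt_iff' _ (n + 3) (n + 2) (n + 1) (by simp) (by simp)]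
        exact ShortComplex.exact_of_isZero_X₂ _ (ChainComplex.isZero_twoTerm_X_succ_succ S.f n)

def projectiveResolution (hS : S.ShortExact) [Projective S.X₁] [Projective S.X₂] :
    ProjectiveResolution S.X₃ where
  complex := ChainComplex.twoTerm S.f
  projective
    | 0 => inferInstanceAs (Projective S.X₂)
    | 1 => inferInstanceAs (Projective S.X₁)
    | n + 2 => (ChainComplex.isZero_twoTerm_X_succ_succ S.f n).projective
  π := ChainComplex.twoTermToSingle₀ S.f S.g S.zero
  quasiIso := hS.quasiIso_twoTermToSingle₀

variable {D : Type*} [HasProjectiveResolutions C] [Category* D] [Abelian D]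
  (hS : S.ShortExact) [Projective S.X₁] [Projective S.X₂] (F : C ⥤ D) [F.Additive]

def leftDerivedZeroIsoCokernel : (F.leftDerived 0).obj S.X₃ ≅ cokernel (F.map S.f) :=
  hS.projectiveResolution.isoLeftDerivedObj F 0 ≪≫
    HomologicalComplex.homologyIsoSc' _ 1 0 0 (by simp) (by simp) ≪≫
    ShortComplex.asIsoHomologyι _ (by simp; rfl) ≪≫
    ShortComplex.opcyclesIsoCokernel _ ≪≫
    cokernelIsoOfEq (congrArg F.map (ChainComplex.twoTerm_d_one_zero S.f))

def leftDerivedOneIsoKernel : (F.leftDerived 1).obj S.X₃ ≅ kernel (F.map S.f) :=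
  hS.projectiveResolution.isoLeftDerivedObj F 1 ≪≫
    HomologicalComplex.homologyIsoSc' _ 2 1 0 (by simp) (by simp) ≪≫
    (ShortComplex.asIsoHomologyπ _
      (by simp [projectiveResolution, ChainComplex.twoTerm_d_succ_succ]; rfl)).symm ≪≫
    ShortComplex.cyclesIsoKernel _ ≪≫
    kernelIsoOfEq (congrArg F.map (ChainComplex.twoTerm_d_one_zero S.f))

end CategoryTheory.ShortComplex.ShortExact

namespace ModuleCat

variable {R : Type u} [CommRing R] {r : R}

variable (r) in
abbrev shortComplexQuotSpanSingleton : ShortComplex (ModuleCat.{u} R) :=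
  ShortComplex.mk (r • 𝟙 (of R R)) (ofHom (Ideal.span {r}).mkQ) (by
    ext
    simp [Algebra.smul_def])

lemma shortExact_shortComplexQuotSpanSingleton (hr : IsSMulRegular R r) :
    (shortComplexQuotSpanSingleton r).ShortExact := by
  refine .mk' ?_ ((mono_iff_injective _).2 hr)
    ((epi_iff_surjective _).2 (Submodule.mkQ_surjective _))
  rw [ShortComplex.moduleCat_exact_iff]
  intro (x : R) hx
  obtain ⟨a, rfl⟩ := Ideal.mem_span_singleton'.1 ((Submodule.Quotient.mk_eq_zero _).1 hx)
  exact ⟨a, mul_comm r a⟩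

variable (M : ModuleCat.{u} R)

def torZeroQuotSpanSingletonIso (hr : IsSMulRegular R r) :
    ((Tor (ModuleCat.{u} R) 0).obj M).obj (of R (R ⧸ Ideal.span {r})) ≅
      of R (M ⧸ LinearMap.range (LinearMap.lsmul R M r)) :=
  (shortExact_shortComplexQuotSpanSingleton hr).leftDerivedZeroIsoCokernel _ ≪≫
    cokernel.mapIso _ (r • 𝟙 M) (ρ_ M) (ρ_ M) (by simp) ≪≫ cokernelIsoRangeQuotient _

def torOneQuotSpanSingletonIso (hr : IsSMulRegular R r) :
    ((Tor (ModuleCat.{u} R) 1).obj M).obj (of R (R ⧸ Ideal.span {r})) ≅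
      of R (LinearMap.ker (LinearMap.lsmul R M r)) :=
  -- left to instance search, this kernel goes through `PreservesLimit` instances and times out
  haveI : HasKernel (((tensoringLeft _).obj M).map (r • 𝟙 (of R R))) := HasKernels.has_limit _
  (shortExact_shortComplexQuotSpanSingleton hr).leftDerivedOneIsoKernel _ ≪≫
    kernel.mapIso _ (r • 𝟙 M) (ρ_ M) (ρ_ M) (by simp) ≪≫ kernelIsoKer _

end ModuleCat

namespace LaurentPolynomial

open Polynomial

variable {R : Type*} [CommRing R]

lemma smul_eq_toLaurent_mul (p : R[X]) (f : R[T;T⁻¹]) : p • f = toLaurent p * f := by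
  rw [Algebra.smul_def, algebraMap_eq_toLaurent]

lemma mem_span_T_one_iff (f : R[T;T⁻¹]) :
    f ∈ Submodule.span R[X] {(T 1 : R[T;T⁻¹])} ↔ ∃ p : R[X], f = T 1 * toLaurent p := by
  simp only [Submodule.mem_span_singleton, smul_eq_toLaurent_mul, eq_comm (a := f), mul_comm]

variable (R) in
abbrev LaurentQuotient := R[T;T⁻¹] ⧸ Submodule.span R[X] {(T 1 : R[T;T⁻¹])}

lemma surjective_lsmul_X : Function.Surjective (LinearMap.lsmul R[X] (LaurentQuotient R) X) := by
  rintro ⟨f⟩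
  refine ⟨Submodule.Quotient.mk (T (-1) * f), ?_⟩
  rw [LinearMap.lsmul_apply, ← Submodule.Quotient.mk_smul, smul_eq_toLaurent_mul, toLaurent_X,
    ← mul_assoc, ← T_add, add_neg_cancel, T_zero, one_mul]
  rfl

lemma mk_mem_ker_lsmul_X_iff (f : R[T;T⁻¹]) :
    Submodule.Quotient.mk f ∈ LinearMap.ker (LinearMap.lsmul R[X] (LaurentQuotient R) X) ↔
      ∃ p : R[X], f = toLaurent p := by
  rw [LinearMap.mem_ker, LinearMap.lsmul_apply, ← Submodule.Quotient.mk_smul,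
    Submodule.Quotient.mk_eq_zero, mem_span_T_one_iff, smul_eq_toLaurent_mul, toLaurent_X]
  exact exists_congr fun p => (isUnit_T 1).mul_right_inj

def polynomialToLaurentQuotient : R[X] →ₗ[R[X]] LaurentQuotient R :=
  (Submodule.mkQ _) ∘ₗ Algebra.linearMap R[X] R[T;T⁻¹]

@[simp]
lemma polynomialToLaurentQuotient_apply (p : R[X]) :
    polynomialToLaurentQuotient p = Submodule.Quotient.mk (toLaurent p) := by
  simp [polynomialToLaurentQuotient, algebraMap_eq_toLaurent]

lemma ker_polynomialToLaurentQuotient :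
    LinearMap.ker (polynomialToLaurentQuotient (R := R)) = Ideal.span {X} := by
  ext p
  rw [LinearMap.mem_ker, polynomialToLaurentQuotient_apply, Submodule.Quotient.mk_eq_zero,
    mem_span_T_one_iff, Ideal.mem_span_singleton']
  simp only [← toLaurent_X, ← map_mul, toLaurent_inj, eq_comm (a := p), mul_comm X]

lemma range_polynomialToLaurentQuotient :
    LinearMap.range (polynomialToLaurentQuotient (R := R)) =
      LinearMap.ker (LinearMap.lsmul R[X] (LaurentQuotient R) X) := by
  apply le_antisymm
  · rintro _ ⟨p, rfl⟩
    rw [polynomialToLaurentQuotient_apply, mk_mem_ker_lsmul_X_iff]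
    exact ⟨p, rfl⟩
  · intro m hm
    obtain ⟨f, rfl⟩ := Submodule.Quotient.mk_surjective _ m
    obtain ⟨p, rfl⟩ := (mk_mem_ker_lsmul_X_iff f).1 hm
    exact ⟨p, polynomialToLaurentQuotient_apply p⟩

def quotSpanXEquivKerLsmulX :
    (R[X] ⧸ Ideal.span {(X : R[X])}) ≃ₗ[R[X]]
      LinearMap.ker (LinearMap.lsmul R[X] (LaurentQuotient R) X) :=
  (Submodule.quotEquivOfEq _ _ ker_polynomialToLaurentQuotient.symm).trans
    (polynomialToLaurentQuotient.quotKerEquivRange.trans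
      (LinearEquiv.ofEq _ _ range_polynomialToLaurentQuotient))

end LaurentPolynomial

end

/-- Let `K` be a field, `S = K[X]`, and `M = K[X,X⁻¹]/(S·X)` the quotient of the Laurent
polynomial ring (as an `S`-module) by the `S`-submodule generated by `X`.  Then
`Tor₀^S(M, K) = 0` while `Tor₁^S(M, K) ≅ K`, where `K = S/(X)` as an `S`-module. -/
theorem tor_laurent_quotient (K : Type) [Field K] :
    Subsingleton (((Tor (ModuleCat (Polynomial K)) 0).obj
        (ModuleCat.of (Polynomial K)
          (LaurentPolynomial K ⧸
            Submodule.span (Polynomial K) {(LaurentPolynomial.T 1 : LaurentPolynomial K)}))).obj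
      (ModuleCat.of (Polynomial K)
        (Polynomial K ⧸ Ideal.span {(Polynomial.X : Polynomial K)}))) ∧
    Nonempty
      ((((Tor (ModuleCat (Polynomial K)) 1).obj
          (ModuleCat.of (Polynomial K)
            (LaurentPolynomial K ⧸
              Submodule.span (Polynomial K)
                {(LaurentPolynomial.T 1 : LaurentPolynomial K)}))).obj
        (ModuleCat.of (Polynomial K)
          (Polynomial K ⧸ Ideal.span {(Polynomial.X : Polynomial K)}))) ≅
        ModuleCat.of (Polynomial K)
          (Polynomial K ⧸ Ideal.span {(Polynomial.X : Polynomial K)})) := by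
  have hX : IsSMulRegular (Polynomial K) Polynomial.X :=
    Polynomial.isRegular_X.left.isSMulRegular
  let M := ModuleCat.of (Polynomial K) (LaurentPolynomial.LaurentQuotient K)
  refine ⟨?_, ⟨ModuleCat.torOneQuotSpanSingletonIso M hX ≪≫
    LaurentPolynomial.quotSpanXEquivKerLsmulX.toModuleIso.symm⟩⟩
  have : Subsingleton (M ⧸ LinearMap.range (LinearMap.lsmul (Polynomial K) M Polynomial.X)) := by
    rw [Submodule.Quotient.subsingleton_iff, LinearMap.range_eq_top]
    exact LaurentPolynomial.surjective_lsmul_X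
  exact (ModuleCat.torZeroQuotSpanSingletonIso M hX).toLinearEquiv.toEquiv.subsingleton
end

section
/- Let K be a field, S = K[X₁,...,X_n] with ℤⁿ-grading, and let M be a bounded below ℤⁿ-graded S-module with linear resolution, i.e., Tor_i^S(M,K) is concentrated in total degree i for all i. If Tor_p^S(M,K) ≠ 0 then for each 0 ≤ i ≤ p there exist at least binom(p,i) distinct multidegrees b ∈ ℕⁿ with |b| = i and Tor_i^S(M,K)_b ≠ 0. -/
/-- A minimal `ℤⁿ`-graded free resolution (not necessarily of finite rank) of a module `M`
over `S = K[X₁,…,Xₙ]`.  Its multidegree labels compute the `ℤⁿ`-graded Tor groups: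
`Tor_i^S(M,K)_b ≅ K^{#{x ∈ ι i : deg x = b}}`. -/
structure MinGradedFreeRes (K : Type) [Field K] (n : ℕ) (M : Type) [AddCommGroup M]
    [Module (MvPolynomial (Fin n) K) M] where
  ι : ℕ → Type
  deg : ∀ i, ι i → Fin n → ℤ
  d : ∀ i, (ι (i + 1) →₀ MvPolynomial (Fin n) K) →ₗ[MvPolynomial (Fin n) K]
    (ι i →₀ MvPolynomial (Fin n) K)
  aug : (ι 0 →₀ MvPolynomial (Fin n) K) →ₗ[MvPolynomial (Fin n) K] M
  aug_surj : Function.Surjective aug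
  exact_aug : Function.Exact (d 0) aug
  exact : ∀ i, Function.Exact (d (i + 1)) (d i)
  minimal : ∀ i x y, MvPolynomial.coeff 0 ((d i) (Finsupp.single x 1) y) = 0
  graded : ∀ i x y m, MvPolynomial.coeff m ((d i) (Finsupp.single x 1) y) ≠ 0 →
    (fun j => (m j : ℤ)) + deg i y = deg (i + 1) x

/-!
In a linear resolution every entry of the differential `F_{i+1} → F_i` is a linear form, so on
the `K`-span of the bases the differential is `∑ⱼ Xⱼ • ∂ⱼ` for scalar matrices `∂ⱼ`. Reading off
the coefficient of `Xⱼ Xₖ` in `d² = 0` shows that the `∂ⱼ` anticommute and square to zero, so they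
give an action of the exterior algebra on `⨁ᵢ Tor_i^S(M,K)` that lowers the homological degree by
one and the multidegree by `eⱼ`. Minimality and exactness make the `∂ⱼ` jointly injective in
positive homological degree. Starting from a basis element of `F_p`, choose successively `p`
variables each acting nontrivially on what has been obtained so far; anticommutation then shows
that every subset `w` of these variables acts nontrivially, which yields an element of
`Tor_{p-|w|}` in multidegree `deg - 𝟙_w`, hence `binom(p, i)` distinct multidegrees in
homological degree `i`.
-/

theorem Finsupp.natCast_single_one_eq_pi_single {σ : Type*} [DecidableEq σ] (j : σ) :
    (fun j' => ((Finsupp.single j 1 : σ →₀ ℕ) j' : ℤ)) = Pi.single j 1 := by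
  ext j'
  rcases eq_or_ne j' j with rfl | h <;> simp [*]

theorem Finset.sum_pi_single_one_injective {ι R : Type*} [DecidableEq ι] [AddCommMonoidWithOne R]
    [NeZero (1 : R)] : Function.Injective fun w : Finset ι => ∑ j ∈ w, (Pi.single j 1 : ι → R) := by
  intro w w' h
  ext k
  have hk := congrFun h k
  by_cases hkw : k ∈ w <;> by_cases hkw' : k ∈ w' <;> simp_all [Finset.sum_apply, Pi.single_apply]

section Anticommuting

variable {ι : Type*}

theorem mul_prod_map_of_anticommute {A : Type*} [Ring A] (D : ι → A)
    (hD : ∀ j k, D j * D k = -(D k * D j)) (j : ι) (l : List ι) :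
    D j * (l.map D).prod = ((-1) ^ l.length : ℤ) • ((l.map D).prod * D j) := by
  induction l with
  | nil => simp
  | cons a l ih =>
    rw [List.map_cons, List.prod_cons, ← mul_assoc, hD, neg_mul, mul_assoc, ih, mul_smul_comm,
      List.length_cons, pow_succ, mul_neg_one, neg_smul, mul_assoc]

variable {R V : Type*} [Ring R] [AddCommGroup V] [Module R V]

theorem exists_card_eq_prod_map_apply_ne_zero [DecidableEq ι] (D : ι → Module.End R V)
    (hanti : ∀ j k, D j * D k = -(D k * D j)) (hsq : ∀ j, D j * D j = 0)
    (L : ℕ → Submodule R V) (hL : ∀ m j, ∀ v ∈ L (m + 1), D j v ∈ L m)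
    (hinj : ∀ m, ∀ v ∈ L (m + 1), v ≠ 0 → ∃ j, D j v ≠ 0) (k : ℕ) {v : V} (hv : v ∈ L k)
    (hv0 : v ≠ 0) :
    ∃ F : Finset ι, F.card = k ∧
      ∀ l : List ι, l.Nodup → (∀ j ∈ l, j ∈ F) → (l.map D).prod v ≠ 0 := by
  have sign_smul_ne_zero : ∀ (s : ℕ) {x : V}, x ≠ 0 → ((-1) ^ s : ℤ) • x ≠ 0 := by
    intro s x hx
    rcases neg_one_pow_eq_or ℤ s with h | h <;> simpa [h] using hx
  induction k generalizing v with
  | zero =>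
    refine ⟨∅, rfl, fun l _ hl => ?_⟩
    rw [List.eq_nil_iff_forall_not_mem.mpr fun j hj => Finset.notMem_empty j (hl j hj)]
    simpa using hv0
  | succ k ih =>
    obtain ⟨j, hj⟩ := hinj k v hv hv0
    obtain ⟨F, hFcard, hF⟩ := ih (hL k j v hv) hj
    have hjF : j ∉ F := fun hjF =>
      hF [j] (List.nodup_singleton j) (by simpa using hjF) (by simp [← Module.End.mul_apply, hsq])
    refine ⟨insert j F, by rw [Finset.card_insert_of_notMem hjF, hFcard], fun l hl hlF => ?_⟩
    by_cases hjl : j ∈ l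
    · obtain ⟨s, t, rfl⟩ := List.append_of_mem hjl
      obtain ⟨hjst, hst⟩ := List.nodup_cons.mp (List.nodup_middle.mp hl)
      have hsub : s ++ t ⊆ s ++ j :: t := ((List.sublist_cons_self j t).append_left s).subset
      have key := hF (s ++ t) hst fun i hi =>
        Finset.mem_of_mem_insert_of_ne (hlF i (hsub hi)) (by rintro rfl; exact hjst hi)
      rw [List.map_append, List.prod_append] at key
      rw [List.map_append, List.map_cons, List.prod_append, List.prod_cons,
        mul_prod_map_of_anticommute D hanti, mul_smul_comm, ← mul_assoc, LinearMap.smul_apply]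
      exact sign_smul_ne_zero _ key
    · -- `D j` anticommutes past the word `l`, and the word is nonzero on `D j v`
      intro h0
      have key := hF l hl fun i hi =>
        Finset.mem_of_mem_insert_of_ne (hlF i hi) (by rintro rfl; exact hjl hi)
      have hcomm := congrArg (· v) (mul_prod_map_of_anticommute D hanti j l)
      simp only [Module.End.mul_apply, h0, map_zero, LinearMap.smul_apply] at hcomm
      exact sign_smul_ne_zero _ key hcomm.symm

end Anticommuting

namespace MvPolynomial

variable {σ R : Type*} [CommSemiring R] [Fintype σ]

theorem IsHomogeneous.eq_sum_X_mul_C {p : MvPolynomial σ R} (hp : p.IsHomogeneous 1) :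
    p = ∑ j, X j * C (coeff (Finsupp.single j 1) p) := by
  classical
  ext m
  simp only [coeff_sum, X, C_apply, monomial_mul, one_mul, add_zero, coeff_monomial]
  by_cases hm : coeff m p = 0
  · rw [hm]
    exact (Finset.sum_eq_zero fun j _ => by split_ifs with h <;> simp [h, hm]).symm
  · obtain ⟨k, rfl⟩ : ∃ k, m = Finsupp.single k 1 := by
      have := hp hm
      rw [Finsupp.weight_apply, Finsupp.sum_fintype _ _ (by simp)] at this
      exact (Finsupp.sum_eq_one_iff m).mp (by simpa [Finsupp.sum_fintype] using this)
    simp [Finsupp.single_left_inj]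

theorem coeff_sum_X_mul_X_mul_C [DecidableEq σ] (c : σ → σ → R) (j k : σ) :
    coeff (Finsupp.single j 1 + Finsupp.single k 1) (∑ a, ∑ b, X a * (X b * C (c a b))) =
      if j = k then c j j else c j k + c k j := by
  simp only [coeff_sum, X, C_apply, monomial_mul, one_mul, add_zero, coeff_monomial,
    Finsupp.single_add_single_eq_single_add_single one_ne_zero one_ne_zero]
  split_ifs with hjk
  · subst hjk; simp [ite_and]
  · have hsplit : ∀ a b, (if a = j ∧ b = k ∨ a = k ∧ b = j then c a b else 0) =
        (if a = j ∧ b = k then c a b else 0) + (if a = k ∧ b = j then c a b else 0) := by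
      intro a b
      by_cases h : a = j ∧ b = k
      · simp [h, hjk, Ne.symm hjk]
      · simp [h]
    simp [hsplit, Finset.sum_add_distrib, ite_and]

end MvPolynomial

namespace MinGradedFreeRes

open MvPolynomial

variable {K : Type} [Field K] {n : ℕ} {M : Type} [AddCommGroup M]
  [Module (MvPolynomial (Fin n) K) M] (res : MinGradedFreeRes K n M)

def IsLinear : Prop := ∀ (i : ℕ) (x : res.ι i), ∑ j, res.deg i x j = i

noncomputable def embConst (i : ℕ) :
    (res.ι i →₀ K) →ₗ[K] (res.ι i →₀ MvPolynomial (Fin n) K) :=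
  Finsupp.mapRange.linearMap (Algebra.linearMap K _)

@[simp]
theorem embConst_apply (i : ℕ) (v : res.ι i →₀ K) (x : res.ι i) :
    res.embConst i v x = C (v x) :=
  rfl

theorem embConst_single (i : ℕ) (x : res.ι i) (c : K) :
    res.embConst i (Finsupp.single x c) = Finsupp.single x (C c) :=
  Finsupp.mapRange_single (hf := map_zero _)

/-- The scalar matrix `∂ⱼ` of a linear resolution, in which `d = ∑ⱼ Xⱼ • ∂ⱼ` (`d_embConst`). -/
noncomputable def strand (i : ℕ) (j : Fin n) : (res.ι (i + 1) →₀ K) →ₗ[K] (res.ι i →₀ K) :=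
  Finsupp.mapRange.linearMap (lcoeff K (Finsupp.single j 1)) ∘ₗ
    (res.d i).restrictScalars K ∘ₗ res.embConst (i + 1)

theorem strand_apply (i : ℕ) (j : Fin n) (v : res.ι (i + 1) →₀ K) (y : res.ι i) :
    res.strand i j v y = coeff (Finsupp.single j 1) (res.d i (res.embConst (i + 1) v) y) :=
  rfl

theorem constantCoeff_d_apply (i : ℕ) (z : res.ι (i + 1) →₀ MvPolynomial (Fin n) K)
    (y : res.ι i) : constantCoeff (res.d i z y) = 0 := by
  induction z using Finsupp.induction_linear with
  | zero => simp
  | add z w hz hw => simp [hz, hw]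
  | single x p =>
    rw [← mul_one p, ← smul_eq_mul, ← Finsupp.smul_single, map_smul, Finsupp.smul_apply,
      smul_eq_mul, map_mul, constantCoeff_eq, res.minimal, mul_zero]

theorem d_single_ne_zero (i : ℕ) (x : res.ι (i + 1)) : res.d i (Finsupp.single x 1) ≠ 0 := by
  intro h
  obtain ⟨z, hz⟩ := (res.exact i _).mp h
  simpa using (congrArg (fun f => constantCoeff (f x)) hz).symm.trans
    (res.constantCoeff_d_apply (i + 1) z x)

theorem isHomogeneous_d_single (hlin : res.IsLinear) (i : ℕ) (x : res.ι (i + 1))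
    (y : res.ι i) : (res.d i (Finsupp.single x 1) y).IsHomogeneous 1 := by
  intro m hm
  have h := congrArg (fun c : Fin n → ℤ => ∑ j, c j) (res.graded i x y m hm)
  simp only [Pi.add_apply, Finset.sum_add_distrib, hlin i y, hlin (i + 1) x] at h
  rw [Finsupp.weight_apply, Finsupp.sum_fintype _ _ (by simp)]
  simp only [Pi.one_apply, smul_eq_mul, mul_one]
  push_cast at h
  exact_mod_cast (by linarith : (∑ j, (m j : ℤ)) = 1)

theorem d_embConst (hlin : res.IsLinear) (i : ℕ) (v : res.ι (i + 1) →₀ K) :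
    res.d i (res.embConst (i + 1) v) =
      ∑ j, (X j : MvPolynomial (Fin n) K) • res.embConst i (res.strand i j v) := by
  induction v using Finsupp.induction_linear with
  | zero => simp
  | add v w hv hw => simp only [map_add, hv, hw, smul_add, Finset.sum_add_distrib]
  | single x c =>
    have hx : res.embConst (i + 1) (Finsupp.single x c) =
        (C c : MvPolynomial (Fin n) K) • Finsupp.single x 1 := by
      rw [embConst_single, Finsupp.smul_single, smul_eq_mul, mul_one]
    ext y : 1
    simp only [Finsupp.finsetSum_apply, Finsupp.smul_apply, smul_eq_mul, embConst_apply,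
      strand_apply, hx, map_smul]
    nth_rw 1 [(res.isHomogeneous_d_single hlin i x y).eq_sum_X_mul_C]
    simp [Finset.mul_sum, coeff_C_mul, mul_left_comm]

theorem exists_strand_ne_zero (hlin : res.IsLinear) (i : ℕ) {v : res.ι (i + 1) →₀ K}
    (hv : v ≠ 0) : ∃ j, res.strand i j v ≠ 0 := by
  by_contra! h
  obtain ⟨z, hz⟩ := (res.exact i _).mp
    (show res.d i (res.embConst (i + 1) v) = 0 by simp [res.d_embConst hlin, h])
  refine hv (Finsupp.ext fun x => ?_)
  simpa using (congrArg (fun f => constantCoeff (f x)) hz).symm.trans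
    (res.constantCoeff_d_apply (i + 1) z x)

theorem sum_X_mul_X_mul_C_strand_strand (hlin : res.IsLinear) (i : ℕ)
    (v : res.ι (i + 2) →₀ K) (y : res.ι i) :
    ∑ k, ∑ j, X k * (X j * C (res.strand i j (res.strand (i + 1) k v) y)) = 0 := by
  have h := (res.exact i).apply_apply_eq_zero (res.embConst (i + 2) v)
  simp only [res.d_embConst hlin, map_sum, map_smul, Finset.smul_sum] at h
  simpa using congrArg (· y) h

theorem strand_strand_self (hlin : res.IsLinear) (i : ℕ) (j : Fin n)
    (v : res.ι (i + 2) →₀ K) : res.strand i j (res.strand (i + 1) j v) = 0 := by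
  ext y
  have h := congrArg (coeff (Finsupp.single j 1 + Finsupp.single j 1))
    (res.sum_X_mul_X_mul_C_strand_strand hlin i v y)
  rwa [coeff_sum_X_mul_X_mul_C, if_pos rfl, coeff_zero] at h

theorem strand_strand_add_strand_strand (hlin : res.IsLinear) (i : ℕ) (j k : Fin n)
    (v : res.ι (i + 2) →₀ K) :
    res.strand i j (res.strand (i + 1) k v) + res.strand i k (res.strand (i + 1) j v) = 0 := by
  rcases eq_or_ne j k with rfl | hjk
  · simp [res.strand_strand_self hlin]
  ext y
  have h := congrArg (coeff (Finsupp.single k 1 + Finsupp.single j 1))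
    (res.sum_X_mul_X_mul_C_strand_strand hlin i v y)
  rwa [coeff_sum_X_mul_X_mul_C, if_neg hjk.symm, coeff_zero] at h

theorem deg_eq_of_mem_support_strand (i : ℕ) (j : Fin n) (x : res.ι (i + 1)) {y : res.ι i}
    (hy : y ∈ (res.strand i j (Finsupp.single x 1)).support) :
    res.deg i y = res.deg (i + 1) x - Pi.single j 1 := by
  rw [Finsupp.mem_support_iff, strand_apply, embConst_single, map_one] at hy
  rw [← res.graded i x y _ hy, Finsupp.natCast_single_one_eq_pi_single]
  abel

theorem deg_nonneg (hdeg0 : ∀ x : res.ι 0, res.deg 0 x = 0) (i : ℕ) (x : res.ι i) (j : Fin n) :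
    0 ≤ res.deg i x j := by
  induction i with
  | zero => simp [hdeg0 x]
  | succ i ih =>
    obtain ⟨y, hy⟩ := Finsupp.ne_iff.mp (res.d_single_ne_zero i x)
    obtain ⟨m, hm⟩ := MvPolynomial.ne_zero_iff.mp hy
    rw [← res.graded i x y m hm, Pi.add_apply]
    exact add_nonneg (Nat.cast_nonneg _) (ih y)

/-- `⨁ᵢ Tor_i^S(M,K)`, with `Tor_i^S(M,K)` identified with `K^{ι i}` as in the docstring of
`MinGradedFreeRes`. -/
abbrev Tor : Type := (Σ i, res.ι i) →₀ K

noncomputable def torOf (i : ℕ) : (res.ι i →₀ K) →ₗ[K] res.Tor :=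
  Finsupp.lmapDomain K K (Sigma.mk i)

/-- The action of `∂ⱼ` on `Tor`; it lowers the homological degree by one. -/
noncomputable def lower (j : Fin n) : Module.End K res.Tor :=
  Finsupp.linearCombination K fun
    | ⟨0, _⟩ => 0
    | ⟨i + 1, x⟩ => res.torOf i (res.strand i j (Finsupp.single x 1))

theorem torOf_single (i : ℕ) (x : res.ι i) (c : K) :
    res.torOf i (Finsupp.single x c) = Finsupp.single ⟨i, x⟩ c :=
  Finsupp.mapDomain_single

theorem torOf_injective (i : ℕ) : Function.Injective (res.torOf i) :=
  Finsupp.mapDomain_injective sigma_mk_injective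

theorem lower_torOf_zero (j : Fin n) (v : res.ι 0 →₀ K) : res.lower j (res.torOf 0 v) = 0 :=
  LinearMap.congr_fun (show res.lower j ∘ₗ res.torOf 0 = 0 by ext; simp [lower, torOf_single]) v

theorem lower_torOf_succ (i : ℕ) (j : Fin n) (v : res.ι (i + 1) →₀ K) :
    res.lower j (res.torOf (i + 1) v) = res.torOf i (res.strand i j v) :=
  LinearMap.congr_fun (show res.lower j ∘ₗ res.torOf (i + 1) = res.torOf i ∘ₗ res.strand i j by
    ext; simp [lower, torOf_single]) v

theorem lower_mul_lower (hlin : res.IsLinear) (j k : Fin n) :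
    res.lower j * res.lower k = -(res.lower k * res.lower j) := by
  refine Finsupp.lhom_ext fun ⟨i, x⟩ c => ?_
  rw [← torOf_single]
  rcases i with _ | _ | i
  · simp [lower_torOf_zero]
  · simp [lower_torOf_succ, lower_torOf_zero]
  · simp only [Module.End.mul_apply, LinearMap.neg_apply, lower_torOf_succ, ← map_neg,
      eq_neg_of_add_eq_zero_left (res.strand_strand_add_strand_strand hlin i j k _)]

theorem lower_mul_self (hlin : res.IsLinear) (j : Fin n) : res.lower j * res.lower j = 0 := by
  refine Finsupp.lhom_ext fun ⟨i, x⟩ c => ?_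
  rw [← torOf_single]
  rcases i with _ | _ | i
  · simp [lower_torOf_zero]
  · simp [lower_torOf_succ, lower_torOf_zero]
  · simp [lower_torOf_succ, res.strand_strand_self hlin]

theorem lower_mem_range_torOf {m : ℕ} (j : Fin n) {v : res.Tor}
    (hv : v ∈ LinearMap.range (res.torOf (m + 1))) :
    res.lower j v ∈ LinearMap.range (res.torOf m) := by
  obtain ⟨u, rfl⟩ := hv
  exact ⟨res.strand m j u, (res.lower_torOf_succ m j u).symm⟩

theorem exists_lower_ne_zero (hlin : res.IsLinear) {m : ℕ} {v : res.Tor}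
    (hv : v ∈ LinearMap.range (res.torOf (m + 1))) (hv0 : v ≠ 0) : ∃ j, res.lower j v ≠ 0 := by
  obtain ⟨u, rfl⟩ := hv
  obtain ⟨j, hj⟩ :=
    res.exists_strand_ne_zero hlin m (v := u) (by rintro rfl; exact hv0 (map_zero _))
  exact ⟨j, by rwa [lower_torOf_succ, ne_eq, map_eq_zero_iff _ (res.torOf_injective m)]⟩

def homogeneous (m : ℕ) (c : Fin n → ℤ) : Submodule K res.Tor :=
  Finsupp.supported K K {s | s.1 = m ∧ res.deg s.1 s.2 = c}

theorem single_mem_homogeneous {m : ℕ} (x : res.ι m) (c : K) :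
    Finsupp.single ⟨m, x⟩ c ∈ res.homogeneous m (res.deg m x) :=
  Finsupp.single_mem_supported K c ⟨rfl, rfl⟩

theorem torOf_mem_homogeneous {m : ℕ} {c : Fin n → ℤ} {w : res.ι m →₀ K}
    (hw : ∀ y ∈ w.support, res.deg m y = c) : res.torOf m w ∈ res.homogeneous m c := by
  classical
  intro s hs
  obtain ⟨y, hy, rfl⟩ := Finset.mem_image.mp (Finsupp.mapDomain_support hs)
  exact ⟨rfl, hw y hy⟩

theorem lower_mem_homogeneous {m : ℕ} {c : Fin n → ℤ} (j : Fin n) {v : res.Tor}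
    (hv : v ∈ res.homogeneous (m + 1) c) :
    res.lower j v ∈ res.homogeneous m (c - Pi.single j 1) := by
  rw [homogeneous, Finsupp.supported_eq_span_single] at hv
  induction hv using Submodule.span_induction with
  | mem _ hs =>
    obtain ⟨⟨_, x⟩, ⟨rfl, rfl⟩, rfl⟩ := hs
    dsimp only
    rw [← torOf_single, lower_torOf_succ]
    exact res.torOf_mem_homogeneous fun y hy => res.deg_eq_of_mem_support_strand m j x hy
  | zero => simp
  | add _ _ _ _ hv hw => simpa using add_mem hv hw
  | smul c _ _ hv => simpa using Submodule.smul_mem _ c hv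

theorem prod_map_lower_mem_homogeneous (l : List (Fin n)) {m : ℕ} {c : Fin n → ℤ} {v : res.Tor}
    (hv : v ∈ res.homogeneous (m + l.length) c) :
    (l.map res.lower).prod v ∈ res.homogeneous m (c - (l.map fun j => Pi.single j 1).sum) := by
  induction l generalizing m with
  | nil => simpa using hv
  | cons j l ih =>
    rw [List.length_cons, ← add_assoc, add_right_comm] at hv
    simpa [sub_add_eq_sub_sub_swap] using res.lower_mem_homogeneous j (ih hv)

theorem exists_deg_eq_of_mem_homogeneous {m : ℕ} {c : Fin n → ℤ} {v : res.Tor}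
    (hv : v ∈ res.homogeneous m c) (hv0 : v ≠ 0) : ∃ x : res.ι m, res.deg m x = c := by
  obtain ⟨⟨_, x⟩, hs⟩ := Finsupp.support_nonempty_iff.mpr hv0
  obtain ⟨rfl, hx⟩ := (Finsupp.mem_supported _ _).mp hv hs
  exact ⟨x, hx⟩

end MinGradedFreeRes

/-- Let `M` be a bounded below `ℤⁿ`-graded module over `S = K[X₁,…,Xₙ]` with a *linear*
resolution (normalized so that the generators sit in degree `0`): in terms of a minimal
graded free resolution `res`, all basis elements of `F_0` have multidegree `0` and every
basis element of `F_i` has total degree `i`, i.e. `Tor_i^S(M,K)_b = 0` unless `|b| = i`.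
If `Tor_p^S(M,K) ≠ 0` (i.e. `F_p ≠ 0`), then for each `0 ≤ i ≤ p` there exist at least
`binom(p,i)` distinct multidegrees `b ∈ ℕⁿ` with `|b| = i` and `Tor_i^S(M,K)_b ≠ 0`
(i.e. some basis element of `F_i` has multidegree `b`). -/
theorem linear_resolution_betti_lower_bound (K : Type) [Field K] (n : ℕ)
    (M : Type) [AddCommGroup M] [Module (MvPolynomial (Fin n) K) M]
    (res : MinGradedFreeRes K n M)
    (hdeg0 : ∀ x : res.ι 0, res.deg 0 x = 0)
    (hlin : ∀ (i : ℕ) (x : res.ι i), (∑ j, res.deg i x j) = (i : ℤ))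
    (p : ℕ) (hp : Nonempty (res.ι p)) :
    ∀ i ≤ p, ∃ B : Finset (Fin n → ℤ), p.choose i ≤ B.card ∧
      ∀ b ∈ B, (∀ j, 0 ≤ b j) ∧ (∑ j, b j) = (i : ℤ) ∧ ∃ x : res.ι i, res.deg i x = b := by
  intro i hip
  obtain ⟨x₀⟩ := hp
  set v : res.Tor := Finsupp.single ⟨p, x₀⟩ 1
  obtain ⟨F, hFcard, hF⟩ := exists_card_eq_prod_map_apply_ne_zero res.lower
    (res.lower_mul_lower hlin) (res.lower_mul_self hlin) (fun m => LinearMap.range (res.torOf m))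
    (fun _ j _ => res.lower_mem_range_torOf j) (fun _ _ => res.exists_lower_ne_zero hlin) p
    (v := v) ⟨_, res.torOf_single p x₀ 1⟩ (Finsupp.single_ne_zero.mpr one_ne_zero)
  refine ⟨(F.powersetCard (p - i)).image fun w => res.deg p x₀ - ∑ j ∈ w, Pi.single j 1, ?_, ?_⟩
  · rw [Finset.card_image_of_injective _
      fun w w' h => Finset.sum_pi_single_one_injective (sub_right_injective h),
      Finset.card_powersetCard, hFcard, Nat.choose_symm hip]
  simp only [Finset.mem_image, Finset.mem_powersetCard]
  rintro _ ⟨w, ⟨hwF, hwcard⟩, rfl⟩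
  have hv : v ∈ res.homogeneous (i + w.toList.length) (res.deg p x₀) := by
    rw [Finset.length_toList, hwcard, Nat.add_sub_cancel' hip]
    exact res.single_mem_homogeneous x₀ 1
  have hmem := res.prod_map_lower_mem_homogeneous w.toList hv
  rw [Finset.sum_map_toList] at hmem
  obtain ⟨x, hx⟩ := res.exists_deg_eq_of_mem_homogeneous hmem
    (hF _ w.nodup_toList fun j hj => hwF (Finset.mem_toList.mp hj))
  exact ⟨fun j => hx ▸ res.deg_nonneg hdeg0 i x j, hx ▸ hlin i x, x, hx⟩
end

section
/- Let R be a commutative ring, S = R[X₁,...,X_n], let F ⊆ {1,...,n}, s ∉ F, and let R[F] ⊆ S denote the R-subalgebra generated by {Xᵢ : i ∈ F}. For any S-module M there is a short exact sequence of S-modules 0 → S ⊗_{R[F]} M → S ⊗_{R[F]} M → S ⊗_{R[F∪{s}]} M → 0, where the first map sends 1 ⊗ m to X_s ⊗ m − 1 ⊗ (X_s·m) and the second is induced by the inclusion R[F] ⊆ R[F∪{s}]. -/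
open TensorProduct

/-- The `R[F]`-module structure on an `MvPolynomial`-module `M`, obtained by restricting
scalars along the inclusion `R[F] ⊆ R[X₁,…,Xₙ]`, where `R[F]` is the subalgebra generated by
the variables indexed by `F`. -/
noncomputable instance Subalgebra.moduleOfModule {R : Type*} [CommRing R] {S : Type*}
    [CommRing S] [Algebra R S] (A : Subalgebra R S) (M : Type*) [AddCommGroup M]
    [Module S M] : Module A M :=
  Module.compHom M (A.val : A →+* S)

/-- Compatibility of the restricted `A`-action with the `S`-action (needed for instance search). -/
instance Subalgebra.smulCommClassOfModule {R : Type*} [CommRing R] {S : Type*}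
    [CommRing S] [Algebra R S] (A : Subalgebra R S) (M : Type*) [AddCommGroup M]
    [Module S M] :
    @SMulCommClass A S M (Subalgebra.moduleOfModule A M).toSMul _ where
  smul_comm a t m := by
    show (a : S) • t • m = t • (a : S) • m
    rw [smul_smul, smul_smul, mul_comm]

/-!
Over `R[G]`, the ring `S` is the polynomial ring in the variables outside `G`, so it is free on
their monomials and `S ⊗_{R[G]} M` is the module of `M`-valued polynomials in the variables
outside `G`. In these coordinates (for `G = F` and `G = F ∪ {s}`), `d` is multiplication by
`X_s - x`, where `x` is the action of `X_s` on `M`, and `e` substitutes `x` for `X_s`. So `d` is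
injective by looking at the top `X_s`-degree, and modulo the image of `d` every term
`X^ν X_s^k m` equals `X^ν (x^k m)`, which is all that `e` remembers.
-/

open MvPolynomial

namespace Finsupp

/- `(σ →₀ ℕ) →₀ M` stands for `M[X_i : i ∈ σ]`: `mulXSub s x` is multiplication by
`X_s - x`, and `evalX s x` substitutes `x` for `X_s`. -/

variable {σ S M : Type*} [Monoid S] [AddCommGroup M] [DistribMulAction S M]
  (s : σ) (x : S)

noncomputable def mulXSub : ((σ →₀ ℕ) →₀ M) →+ ((σ →₀ ℕ) →₀ M) :=
  mapDomain.addMonoidHom (· + single s 1) -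
    mapRange.addMonoidHom (DistribSMul.toAddMonoidHom M x)

noncomputable def evalX : ((σ →₀ ℕ) →₀ M) →+ (({i // i ≠ s} →₀ ℕ) →₀ M) :=
  liftAddHom fun μ =>
    (singleAddHom (μ.subtypeDomain (· ≠ s))).comp (DistribSMul.toAddMonoidHom M (x ^ μ s))

@[simp]
lemma mulXSub_single (μ : σ →₀ ℕ) (m : M) :
    mulXSub s x (single μ m) = single (μ + single s 1) m - single μ (x • m) := by
  simp [mulXSub]

@[simp]
lemma evalX_single (μ : σ →₀ ℕ) (m : M) :
    evalX s x (single μ m) = single (μ.subtypeDomain (· ≠ s)) (x ^ μ s • m) := by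
  simp [evalX]

lemma mulXSub_injective : Function.Injective (mulXSub (M := M) s x) := by
  refine (injective_iff_map_eq_zero _).2 fun a ha => ?_
  by_contra hne
  obtain ⟨μ, hμ, hmax⟩ := a.support.exists_max_image (· s) (support_nonempty_iff.2 hne)
  have hshift : a (μ + single s 1) = 0 :=
    notMem_support_iff.1 fun h => by simpa using hmax _ h
  have := DFunLike.congr_fun ha (μ + single s 1)
  simp [mulXSub, mapDomain_apply (add_left_injective _), hshift] at this
  exact mem_support_iff.1 hμ this

lemma evalX_comp_mulXSub : (evalX s x).comp (mulXSub (M := M) s x) = 0 := by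
  refine addHom_ext fun μ m => ?_
  have : (μ + single s 1).subtypeDomain (· ≠ s) = μ.subtypeDomain (· ≠ s) := by
    ext i; simp [Ne.symm i.2]
  simp [this, pow_succ, mul_smul]

lemma single_add_single_sub_mem_range (ν : σ →₀ ℕ) (k : ℕ) (m : M) :
    single (ν + single s k) m - single ν (x ^ k • m) ∈ (mulXSub s x).range := by
  induction k generalizing m with
  | zero => simp
  | succ k ih =>
    have hstep : mulXSub s x (single (ν + single s k) m) ∈ (mulXSub s x).range := ⟨_, rfl⟩
    rw [mulXSub_single, add_assoc, ← single_add] at hstep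
    convert add_mem hstep (ih (x • m)) using 1
    rw [pow_succ, mul_smul]
    abel

variable [DecidableEq σ]

lemma extendDomain_subtypeDomain_ne_add_single (μ : σ →₀ ℕ) :
    (μ.subtypeDomain (· ≠ s)).extendDomain + single s (μ s) = μ := by
  ext i
  by_cases h : i = s <;> simp [h]

lemma evalX_comp_mapDomain_extendDomain :
    (evalX s x).comp (mapDomain.addMonoidHom extendDomain) =
      AddMonoidHom.id (({i // i ≠ s} →₀ ℕ) →₀ M) :=
  addHom_ext fun ν m => by simp

lemma evalX_surjective : Function.Surjective (evalX (M := M) s x) :=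
  Function.LeftInverse.surjective (DFunLike.congr_fun (evalX_comp_mapDomain_extendDomain s x))

lemma sub_mapDomain_extendDomain_evalX_mem_range (a : (σ →₀ ℕ) →₀ M) :
    a - mapDomain extendDomain (evalX s x a) ∈ (mulXSub s x).range := by
  induction a using induction_linear with
  | zero => simp
  | add a b ha hb =>
    convert add_mem ha hb using 1
    rw [map_add, mapDomain_add]
    abel
  | single μ m =>
    rw [evalX_single, mapDomain_single]
    have := single_add_single_sub_mem_range s x (μ.subtypeDomain (· ≠ s)).extendDomain (μ s) m
    rwa [extendDomain_subtypeDomain_ne_add_single] at this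

lemma exact_mulXSub_evalX : Function.Exact (mulXSub (M := M) s x) (evalX s x) := by
  intro a
  refine ⟨fun ha => ?_, ?_⟩
  · simpa [ha] using sub_mapDomain_extendDomain_evalX_mem_range s x a
  · rintro ⟨b, rfl⟩
    exact DFunLike.congr_fun (evalX_comp_mulXSub s x) b

end Finsupp

namespace Finset

variable {σ : Type*} [DecidableEq σ] {F : Finset σ} {s : σ}

def complInsertEquiv (hs : s ∉ F) :
    {i : ↥(↑F : Set σ)ᶜ // i ≠ ⟨s, hs⟩} ≃ ↥(↑(insert s F) : Set σ)ᶜ where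
  toFun i := ⟨i.1, by
    rw [Set.mem_compl_iff, coe_insert, Set.mem_insert_iff, not_or]
    exact ⟨fun h => i.2 (Subtype.ext h), i.1.2⟩⟩
  invFun j :=
    have hj : (j : σ) ≠ s ∧ (j : σ) ∉ F := by simpa [not_or] using j.2
    ⟨⟨j, hj.2⟩, fun h => hj.1 (congrArg Subtype.val h)⟩
  left_inv _ := rfl
  right_inv _ := rfl

end Finset

namespace MvPolynomial

section
variable (R : Type*) [CommRing R] {σ : Type*} (G : Set σ) {κ : Type*} (ι : κ ≃ ↥Gᶜ)

open Classical in
noncomputable def supportedComplInv :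
    MvPolynomial σ R →ₐ[R] MvPolynomial κ (supported R G) :=
  aeval fun i =>
    if h : i ∈ G then C ⟨X i, Algebra.subset_adjoin ⟨i, h, rfl⟩⟩ else X (ι.symm ⟨i, h⟩)

lemma supportedComplInv_coe (a : supported R G) : supportedComplInv R G ι a = C a := by
  let e := (supportedEquivMvPolynomial (R := R) G).symm
  obtain ⟨p, rfl⟩ := e.surjective a
  have hX (i : G) : e (X i) = ⟨X i, Algebra.subset_adjoin ⟨i, i.2, rfl⟩⟩ :=
    Subtype.ext (supportedEquivMvPolynomial_symm_X G i)
  have : (supportedComplInv R G ι).comp ((supported R G).val.comp e.toAlgHom) =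
      (IsScalarTower.toAlgHom R _ (MvPolynomial κ (supported R G))).comp e.toAlgHom :=
    algHom_ext fun i => by simp [supportedComplInv, hX]
  exact AlgHom.congr_fun this p

noncomputable def supportedComplAlgEquiv :
    MvPolynomial κ (supported R G) ≃ₐ[supported R G] MvPolynomial σ R :=
  AlgEquiv.ofAlgHom (aeval fun j => X (ι j : σ))
    { supportedComplInv R G ι with commutes' := supportedComplInv_coe R G ι }
    (AlgHom.restrictScalars_injective R <| algHom_ext fun i => by
      by_cases h : i ∈ G <;> simp [supportedComplInv, h])
    (algHom_ext fun j => by simp [supportedComplInv, Set.notMem_of_mem_compl (ι j).2])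

noncomputable def supportedComplBasis :
    Module.Basis (κ →₀ ℕ) (supported R G) (MvPolynomial σ R) :=
  (basisMonomials κ (supported R G)).map (supportedComplAlgEquiv R G ι).toLinearEquiv

lemma supportedComplBasis_apply (μ : κ →₀ ℕ) :
    supportedComplBasis R G ι μ = monomial (μ.mapDomain fun j => (ι j : σ)) 1 := by
  change supportedComplAlgEquiv R G ι (monomial μ 1) = _
  rw [supportedComplAlgEquiv, AlgEquiv.ofAlgHom_apply, aeval_monomial]
  simp [monomial_eq, Finsupp.prod_mapDomain_index, pow_add]

lemma supportedComplBasis_mul_X (μ : κ →₀ ℕ) (j : κ) :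
    supportedComplBasis R G ι μ * X (ι j : σ) =
      supportedComplBasis R G ι (μ + Finsupp.single j 1) := by
  simp [supportedComplBasis_apply, X, monomial_mul, Finsupp.mapDomain_add]

end

lemma supportedComplBasis_eq_mul_X_pow (R : Type*) [CommRing R] {σ : Type*} [DecidableEq σ]
    {F : Finset σ} {s : σ} (hs : s ∉ F) (μ : ↥(↑F : Set σ)ᶜ →₀ ℕ) :
    supportedComplBasis R (↑F : Set σ) (Equiv.refl _) μ =
      supportedComplBasis R (↑(insert s F) : Set σ) (F.complInsertEquiv hs)
        (μ.subtypeDomain (· ≠ ⟨s, hs⟩)) * X s ^ μ ⟨s, hs⟩ := by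
  nth_rewrite 1 [← Finsupp.extendDomain_subtypeDomain_ne_add_single ⟨s, hs⟩ μ]
  simp [supportedComplBasis_apply, X_pow_eq_monomial, monomial_mul, Finsupp.mapDomain_add,
    Finsupp.extendDomain_eq_embDomain_subtype, Finsupp.embDomain_eq_mapDomain,
    ← Finsupp.mapDomain_comp]
  rfl

end MvPolynomial

section
variable {R M N ι : Type*} [CommSemiring R] [AddCommMonoid M] [Module R M] [AddCommMonoid N]
  [Module R N] [DecidableEq ι] (ℬ : Module.Basis ι R M)

lemma TensorProduct.equivFinsuppOfBasisLeft_basis_tmul (i : ι) (n : N) :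
    equivFinsuppOfBasisLeft ℬ (ℬ i ⊗ₜ n) = Finsupp.single i n := by
  simp

lemma TensorProduct.equivFinsuppOfBasisLeft_symm_single (i : ι) (n : N) :
    (equivFinsuppOfBasisLeft ℬ).symm (Finsupp.single i n) = ℬ i ⊗ₜ n := by
  rw [LinearEquiv.symm_apply_eq, equivFinsuppOfBasisLeft_basis_tmul]

end

section
variable {R S M : Type*} [CommRing R] [CommRing S] [Algebra R S] (A : Subalgebra R S)
  [AddCommGroup M] [Module S M]

lemma Subalgebra.mul_tmul_eq_tmul_smul {a : S} (ha : a ∈ A) (t : S) (m : M) :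
    (a * t) ⊗ₜ[A] m = t ⊗ₜ (a • m) :=
  (smul_tmul' (⟨a, ha⟩ : A) t m).symm.trans
    ((TensorProduct.mk A S M t).map_smul ⟨a, ha⟩ m).symm

lemma LinearMap.apply_tmul_of_apply_one_tmul (x : S) (d : S ⊗[A] M →ₗ[S] S ⊗[A] M)
    (hd : ∀ m : M, d (1 ⊗ₜ m) = x ⊗ₜ m - 1 ⊗ₜ (x • m)) (t : S) (m : M) :
    d (t ⊗ₜ m) = (t * x) ⊗ₜ m - t ⊗ₜ (x • m) := by
  rw [← mul_one t, ← smul_eq_mul, ← smul_tmul', map_smul, hd, smul_sub, smul_tmul', smul_tmul',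
    smul_eq_mul, smul_eq_mul, mul_one, mul_comm]

end

section
variable {R : Type*} [CommRing R] {σ : Type*} [DecidableEq σ] {F : Finset σ} {s : σ}
  (hs : s ∉ F) {M : Type*} [AddCommGroup M] [Module (MvPolynomial σ R) M]

lemma equivFinsupp_map_eq_mulXSub
    (d : MvPolynomial σ R ⊗[supported R (↑F : Set σ)] M →ₗ[MvPolynomial σ R]
      MvPolynomial σ R ⊗[supported R (↑F : Set σ)] M)
    (hd : ∀ m : M, d (1 ⊗ₜ m) =
      (X s : MvPolynomial σ R) ⊗ₜ m - 1 ⊗ₜ ((X s : MvPolynomial σ R) • m))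
    (x : MvPolynomial σ R ⊗[supported R (↑F : Set σ)] M) :
    equivFinsuppOfBasisLeft (supportedComplBasis R _ (Equiv.refl _)) (d x) =
      Finsupp.mulXSub ⟨s, hs⟩ (X s : MvPolynomial σ R)
        (equivFinsuppOfBasisLeft (supportedComplBasis R _ (Equiv.refl _)) x) := by
  set Θ := equivFinsuppOfBasisLeft (N := M) (supportedComplBasis R (↑F : Set σ) (Equiv.refl _))
  obtain ⟨a, rfl⟩ := Θ.symm.surjective x
  rw [Θ.apply_symm_apply]
  induction a using Finsupp.induction_linear with
  | zero => simp
  | add a b ha hb => simp only [map_add, ha, hb]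
  | single μ m =>
    have hX : (X s : MvPolynomial σ R) = X ((Equiv.refl _ ⟨s, hs⟩ : ↥(↑F : Set σ)ᶜ) : σ) := rfl
    rw [equivFinsuppOfBasisLeft_symm_single, LinearMap.apply_tmul_of_apply_one_tmul _ _ d hd,
      map_sub, hX, supportedComplBasis_mul_X, equivFinsuppOfBasisLeft_basis_tmul,
      equivFinsuppOfBasisLeft_basis_tmul, Finsupp.mulXSub_single]

lemma equivFinsupp_map_eq_evalX
    (e : MvPolynomial σ R ⊗[supported R (↑F : Set σ)] M →ₗ[MvPolynomial σ R]
      MvPolynomial σ R ⊗[supported R (↑(insert s F) : Set σ)] M)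
    (he : ∀ (t : MvPolynomial σ R) (m : M), e (t ⊗ₜ m) = t ⊗ₜ m)
    (x : MvPolynomial σ R ⊗[supported R (↑F : Set σ)] M) :
    equivFinsuppOfBasisLeft (supportedComplBasis R _ (F.complInsertEquiv hs)) (e x) =
      Finsupp.evalX ⟨s, hs⟩ (X s : MvPolynomial σ R)
        (equivFinsuppOfBasisLeft (supportedComplBasis R _ (Equiv.refl _)) x) := by
  set Θ := equivFinsuppOfBasisLeft (N := M) (supportedComplBasis R (↑F : Set σ) (Equiv.refl _))
  obtain ⟨a, rfl⟩ := Θ.symm.surjective x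
  rw [Θ.apply_symm_apply]
  induction a using Finsupp.induction_linear with
  | zero => simp
  | add a b ha hb => simp only [map_add, ha, hb]
  | single μ m =>
    have hpow : (X s : MvPolynomial σ R) ^ μ ⟨s, hs⟩ ∈ supported R (↑(insert s F) : Set σ) :=
      pow_mem (Algebra.subset_adjoin (Set.mem_image_of_mem X (by simp))) _
    rw [equivFinsuppOfBasisLeft_symm_single, he, supportedComplBasis_eq_mul_X_pow R hs,
      mul_comm, Subalgebra.mul_tmul_eq_tmul_smul _ hpow, equivFinsuppOfBasisLeft_basis_tmul,
      Finsupp.evalX_single]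

end

/-- Let `R` be a commutative ring, `S = R[X₁,…,Xₙ]`, `F ⊆ {1,…,n}`, `s ∉ F`, and `R[F] ⊆ S`
the `R`-subalgebra generated by the variables `Xᵢ` with `i ∈ F`.  For any `S`-module `M`
there is a short exact sequence of `S`-modules
`0 → S ⊗_{R[F]} M → S ⊗_{R[F]} M → S ⊗_{R[F∪{s}]} M → 0`,
where the first map `d` sends `1 ⊗ m` to `X_s ⊗ m − 1 ⊗ (X_s·m)` and the second map `e` is
induced by the inclusion `R[F] ⊆ R[F∪{s}]`. -/
theorem tensor_supported_short_exact
    (R : Type*) [CommRing R] (n : ℕ) (F : Finset (Fin n)) (s : Fin n) (hs : s ∉ F)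
    (M : Type*) [AddCommGroup M] [Module (MvPolynomial (Fin n) R) M]
    (d : TensorProduct (MvPolynomial.supported R (↑F : Set (Fin n)))
        (MvPolynomial (Fin n) R) M →ₗ[MvPolynomial (Fin n) R]
      TensorProduct (MvPolynomial.supported R (↑F : Set (Fin n))) (MvPolynomial (Fin n) R) M)
    (hd : ∀ m : M, d (1 ⊗ₜ m) =
      (MvPolynomial.X s : MvPolynomial (Fin n) R) ⊗ₜ m -
        1 ⊗ₜ ((MvPolynomial.X s : MvPolynomial (Fin n) R) • m))
    (e : TensorProduct (MvPolynomial.supported R (↑F : Set (Fin n)))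
        (MvPolynomial (Fin n) R) M →ₗ[MvPolynomial (Fin n) R]
      TensorProduct (MvPolynomial.supported R (↑(insert s F) : Set (Fin n)))
        (MvPolynomial (Fin n) R) M)
    (he : ∀ (t : MvPolynomial (Fin n) R) (m : M), e (t ⊗ₜ m) = t ⊗ₜ m) :
    Function.Injective d ∧ Function.Surjective e ∧ LinearMap.range d = LinearMap.ker e := by
  set ΘF :=
    equivFinsuppOfBasisLeft (N := M) (supportedComplBasis R (↑F : Set (Fin n)) (Equiv.refl _))
  set Θ := equivFinsuppOfBasisLeft (supportedComplBasis R _ (F.complInsertEquiv hs)) (N := M)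
  have hD := equivFinsupp_map_eq_mulXSub hs d hd
  have hE := equivFinsupp_map_eq_evalX hs e he
  refine ⟨fun x y hxy => ΘF.injective ?_, fun z => ?_, ?_⟩
  · refine Finsupp.mulXSub_injective ⟨s, hs⟩ (X s : MvPolynomial (Fin n) R) ?_
    rw [← hD, ← hD, hxy]
  · obtain ⟨a, ha⟩ := Finsupp.evalX_surjective (⟨s, hs⟩ : ↥(↑F : Set (Fin n))ᶜ)
      (X s : MvPolynomial (Fin n) R) (Θ z)
    exact ⟨ΘF.symm a, Θ.injective (by rw [hE, ΘF.apply_symm_apply, ha])⟩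
  · have hexact : Function.Exact d e :=
      Function.Exact.of_ladder_addEquiv_of_exact' ΘF.toAddEquiv ΘF.toAddEquiv Θ.toAddEquiv
        (f₁₂ := d.toAddMonoidHom) (f₂₃ := e.toAddMonoidHom)
        (AddMonoidHom.ext fun x => (hD x).symm) (AddMonoidHom.ext fun x => (hE x).symm)
        (Finsupp.exact_mulXSub_evalX _ _)
    exact (LinearMap.exact_iff.1 hexact).symm
end
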